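/- arXiv:2303.05353 — 2 statements merged into one kernel-verified Lean document; each statement's English description precedes it below -/
import Mathlib

section
/- Let M be an orthogonal matroid on E with dual M* (whose bases are {B* : B basis of M}). Then for every x ∈ E, the set of circuits of the elementary minor M|x equals the set of minimal elements (under inclusion) of {C \ {x} : C a circuit of M with x* ∉ C and C ≠ {x}}. -/
open scoped Classical

/-- The ground set `E = [n] ∪ [n]*`: `(i, true)` encodes `i ∈ [n]` and `(i, false)` encodes
`i* ∈ [n]*`. -/
abbrev OE (n : ℕ) := Fin n × Bool

/-- The involution `* : E → E`. -/
def ostar {n : ℕ} (x : OE n) : OE n := (x.1, !x.2)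

/-- The divergence `{x, x*}`. -/
def pairS {n : ℕ} (x : OE n) : Finset (OE n) := {x, ostar x}

/-- `A` is admissible (a subtransversal): `A ∩ A* = ∅`. -/
def IsAdmissible {n : ℕ} (A : Finset (OE n)) : Prop := ∀ x ∈ A, ostar x ∉ A

/-- A transversal: an admissible set of size `n`. -/
def IsTransversal {n : ℕ} (T : Finset (OE n)) : Prop := T.card = n ∧ IsAdmissible T

/-- `𝓑` is the set of bases of an orthogonal matroid on `E = [n] ∪ [n]*`: a nonempty
collection of transversals satisfying the symmetric exchange axiom. -/
def IsOrthoMatroid {n : ℕ} (𝓑 : Set (Finset (OE n))) : Prop :=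
  𝓑.Nonempty ∧ (∀ B ∈ 𝓑, IsTransversal B) ∧
  ∀ B₁ ∈ 𝓑, ∀ B₂ ∈ 𝓑, ∀ x : OE n,
    x ∈ symmDiff B₁ B₂ → ostar x ∈ symmDiff B₁ B₂ →
    ∃ y : OE n, y ∈ symmDiff B₁ B₂ ∧ ostar y ∈ symmDiff B₁ B₂ ∧
      pairS y ≠ pairS x ∧ symmDiff B₁ (pairS x ∪ pairS y) ∈ 𝓑

/-- An admissible set is independent if it is contained in some basis. -/
def IsIndep {n : ℕ} (𝓑 : Set (Finset (OE n))) (I : Finset (OE n)) : Prop := ∃ B ∈ 𝓑, I ⊆ B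

/-- A circuit: a minimal dependent admissible set. -/
def IsCircuit {n : ℕ} (𝓑 : Set (Finset (OE n))) (C : Finset (OE n)) : Prop :=
  IsAdmissible C ∧ ¬ IsIndep 𝓑 C ∧ ∀ D ⊂ C, IsIndep 𝓑 D

/-- `x` is singular in `M` if no basis contains `x`. -/
def IsSingular {n : ℕ} (𝓑 : Set (Finset (OE n))) (x : OE n) : Prop := ∀ B ∈ 𝓑, x ∉ B

/-- Bases of the elementary minor `M|x`: for nonsingular `x`, `{B \ {x} : x ∈ B ∈ 𝓑}`;
for singular `x`, `M|x := M|x*`. -/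
noncomputable def minorB {n : ℕ} (𝓑 : Set (Finset (OE n))) (x : OE n) :
    Set (Finset (OE n)) :=
  if IsSingular 𝓑 x then {B' | ∃ B ∈ 𝓑, ostar x ∈ B ∧ B' = B.erase (ostar x)}
  else {B' | ∃ B ∈ 𝓑, x ∈ B ∧ B' = B.erase x}

/-- Circuits of a family `𝓑` restricted to a ground set `Grd ⊆ E`. -/
def IsCircuitOn {n : ℕ} (𝓑 : Set (Finset (OE n))) (Grd : Finset (OE n))
    (C : Finset (OE n)) : Prop :=
  C ⊆ Grd ∧ IsAdmissible C ∧ ¬ IsIndep 𝓑 C ∧ ∀ D ⊂ C, IsIndep 𝓑 D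

/-- The candidates `{C \ {x} : x* ∉ C ∈ 𝓒(M), C ≠ {x}}`. -/
def minorCircCand {n : ℕ} (𝓑 : Set (Finset (OE n))) (x : OE n) :
    Set (Finset (OE n)) :=
  {D | ∃ C : Finset (OE n), IsCircuit 𝓑 C ∧ ostar x ∉ C ∧ C ≠ {x} ∧ D = C.erase x}


section AuxCircuitsOfMinor

lemma ostar_ne' {n : ℕ} (x : OE n) : ostar x ≠ x := by
  simp [ostar, Prod.ext_iff]

lemma ostar_ostar' {n : ℕ} (x : OE n) : ostar (ostar x) = x := by
  simp [ostar]

lemma admissible_subset' {n : ℕ} {A D : Finset (OE n)} (hDA : D ⊆ A)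
    (hA : IsAdmissible A) : IsAdmissible D :=
  fun x hx h => hA x (hDA hx) (hDA h)

lemma indep_subset' {n : ℕ} {𝓑 : Set (Finset (OE n))} {A D : Finset (OE n)}
    (hA : IsIndep 𝓑 A) (hDA : D ⊆ A) : IsIndep 𝓑 D := by
  obtain ⟨B, hB, hsub⟩ := hA; exact ⟨B, hB, hDA.trans hsub⟩

lemma exists_circuit' {n : ℕ} {𝓑 : Set (Finset (OE n))} :
    ∀ A : Finset (OE n), IsAdmissible A → ¬ IsIndep 𝓑 A →
      ∃ C, C ⊆ A ∧ IsCircuit 𝓑 C := by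
  intro A
  induction A using Finset.strongInduction with
  | _ A ih =>
    intro hadm hdep
    by_cases hmin : ∀ D ⊂ A, IsIndep 𝓑 D
    · exact ⟨A, subset_rfl, hadm, hdep, hmin⟩
    · push_neg at hmin
      obtain ⟨D, hDA, hDdep⟩ := hmin
      obtain ⟨C, hCD, hC⟩ := ih D hDA (admissible_subset' hDA.subset hadm) hDdep
      exact ⟨C, hCD.trans hDA.subset, hC⟩

lemma indep_minor_ns' {n : ℕ} {𝓑 : Set (Finset (OE n))} {x : OE n}
    (hns : ¬ IsSingular 𝓑 x) {I : Finset (OE n)} (hxI : x ∉ I) :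
    IsIndep (minorB 𝓑 x) I ↔ IsIndep 𝓑 (insert x I) := by
  unfold minorB
  rw [if_neg hns]
  constructor
  · rintro ⟨B', ⟨B, hB, hxB, rfl⟩, hIB'⟩
    exact ⟨B, hB, Finset.insert_subset hxB (hIB'.trans (Finset.erase_subset _ _))⟩
  · rintro ⟨B, hB, hsub⟩
    refine ⟨B.erase x, ⟨B, hB, hsub (Finset.mem_insert_self _ _), rfl⟩, fun a ha => ?_⟩
    exact Finset.mem_erase.2 ⟨fun h => hxI (h ▸ ha), hsub (Finset.mem_insert_of_mem ha)⟩

lemma mem_star_of_singular' {n : ℕ} {𝓑 : Set (Finset (OE n))} {x : OE n}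
    (hom : IsOrthoMatroid 𝓑) (hs : IsSingular 𝓑 x) {B : Finset (OE n)} (hB : B ∈ 𝓑) :
    ostar x ∈ B := by
  obtain ⟨hcard, hadm⟩ := hom.2.1 B hB
  have hinj : Set.InjOn (fun b : OE n => b.1) B := by
    intro b hb b' hb' heq
    simp only at heq
    by_contra hne
    have h2 : b'.2 = !b.2 := by
      rcases Bool.eq_or_eq_not b'.2 b.2 with h | h
      · exact absurd (Prod.ext heq h.symm) hne
      · exact h
    have : ostar b = b' := Prod.ext heq h2.symm
    exact hadm b hb (this ▸ hb')
  have himg : (B.image (fun b : OE n => b.1)) = Finset.univ := by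
    apply Finset.eq_univ_of_card
    rw [Finset.card_image_of_injOn hinj, hcard, Fintype.card_fin]
  have : x.1 ∈ B.image (fun b : OE n => b.1) := by rw [himg]; exact Finset.mem_univ _
  obtain ⟨b, hb, hb1⟩ := Finset.mem_image.1 this
  rcases Bool.eq_or_eq_not b.2 x.2 with h | h
  · exact absurd ((Prod.ext hb1 h : b = x) ▸ hb) (hs B hB)
  · have : ostar x = b := Prod.ext hb1.symm h.symm
    rwa [this]

lemma indep_minor_s' {n : ℕ} {𝓑 : Set (Finset (OE n))} {x : OE n}
    (hom : IsOrthoMatroid 𝓑) (hs : IsSingular 𝓑 x) {I : Finset (OE n)}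
    (hxI : ostar x ∉ I) :
    IsIndep (minorB 𝓑 x) I ↔ IsIndep 𝓑 I := by
  unfold minorB
  rw [if_pos hs]
  constructor
  · rintro ⟨B', ⟨B, hB, hxB, rfl⟩, hIB'⟩
    exact ⟨B, hB, hIB'.trans (Finset.erase_subset _ _)⟩
  · rintro ⟨B, hB, hsub⟩
    refine ⟨B.erase (ostar x), ⟨B, hB, mem_star_of_singular' hom hs hB, rfl⟩,
      fun a ha => ?_⟩
    exact Finset.mem_erase.2 ⟨fun h2 => hxI (h2 ▸ ha), hsub ha⟩

end AuxCircuitsOfMinor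

/-- The circuits of the elementary minor `M|x` are the minimal elements of
`{C \ {x} : x* ∉ C ∈ 𝓒(M), C ≠ {x}}`. -/
theorem circuits_of_minor {n : ℕ} (𝓑 : Set (Finset (OE n))) (h : IsOrthoMatroid 𝓑)
    (x : OE n) :
    {C | IsCircuitOn (minorB 𝓑 x) (Finset.univ \ pairS x) C} =
      {C | C ∈ minorCircCand 𝓑 x ∧ ∀ D ∈ minorCircCand 𝓑 x, ¬ D ⊂ C} := by
  have hxx : ostar x ≠ x := ostar_ne' x
  have groundsub : ∀ {C : Finset (OE n)}, x ∉ C → ostar x ∉ C →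
      C ⊆ Finset.univ \ pairS x := by
    intro C h1 h2 a ha
    simp only [Finset.mem_sdiff, Finset.mem_univ, true_and, pairS, Finset.mem_insert,
      Finset.mem_singleton]
    push_neg
    exact ⟨fun hh => h1 (hh ▸ ha), fun hh => h2 (hh ▸ ha)⟩
  have ground_not : ∀ {C : Finset (OE n)}, C ⊆ Finset.univ \ pairS x →
      x ∉ C ∧ ostar x ∉ C := by
    intro C hCg
    constructor
    · intro hx
      have := (Finset.mem_sdiff.1 (hCg hx)).2
      simp [pairS] at this
    · intro hx
      have := (Finset.mem_sdiff.1 (hCg hx)).2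
      simp [pairS] at this
  have depmono : ∀ {A B : Finset (OE n)}, A ⊆ B → ¬ IsIndep 𝓑 A → ¬ IsIndep 𝓑 B :=
    fun hAB hA hB => hA (indep_subset' hB hAB)
  by_cases hs : IsSingular 𝓑 x
  · -- singular case
    have xC_of : ∀ {C' : Finset (OE n)}, IsCircuit 𝓑 C' → C' ≠ {x} → x ∉ C' := by
      intro C' hC' hne' hxC'
      have hss : {x} ⊂ C' :=
        Finset.ssubset_iff_subset_ne.2
          ⟨Finset.singleton_subset_iff.2 hxC', fun hh => hne' hh.symm⟩
      obtain ⟨B, hB, hsub⟩ := hC'.2.2 _ hss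
      exact hs B hB (hsub (Finset.mem_singleton_self x))
    ext C
    simp only [Set.mem_setOf_eq, minorCircCand]
    constructor
    · rintro ⟨hCg, hCadm, hCdep, hCmin⟩
      obtain ⟨hxC, hxsC⟩ := ground_not hCg
      have hdep : ¬ IsIndep 𝓑 C := fun hi => hCdep ((indep_minor_s' h hs hxsC).2 hi)
      have hmin : ∀ D ⊂ C, IsIndep 𝓑 D := fun D hD =>
        (indep_minor_s' h hs (fun hx => hxsC (hD.subset hx))).1 (hCmin D hD)
      refine ⟨⟨C, ⟨hCadm, hdep, hmin⟩, hxsC, ?_, (Finset.erase_eq_of_notMem hxC).symm⟩, ?_⟩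
      · rintro rfl
        exact hxC (Finset.mem_singleton_self x)
      · rintro D ⟨C', hC', hxs', hne', rfl⟩ hDC
        have hxC' : x ∉ C' := xC_of hC' hne'
        rw [Finset.erase_eq_of_notMem hxC'] at hDC
        exact hC'.2.1 (hmin C' hDC)
    · rintro ⟨⟨C', hC', hxs', hne', rfl⟩, -⟩
      have hxC' : x ∉ C' := xC_of hC' hne'
      rw [Finset.erase_eq_of_notMem hxC']
      exact ⟨groundsub hxC' hxs', hC'.1,
        fun hi => hC'.2.1 ((indep_minor_s' h hs hxs').1 hi),
        fun D hD => (indep_minor_s' h hs (fun hx => hxs' (hD.subset hx))).2 (hC'.2.2 D hD)⟩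
  · -- nonsingular case
    obtain ⟨B₀, hB₀, hxB₀⟩ : ∃ B ∈ 𝓑, x ∈ B := by
      by_contra hc
      push_neg at hc
      exact hs hc
    have hxindep : IsIndep 𝓑 {x} := ⟨B₀, hB₀, Finset.singleton_subset_iff.2 hxB₀⟩
    have insert_erase_sub : ∀ C' : Finset (OE n), C' ⊆ insert x (C'.erase x) := by
      intro C' a ha
      by_cases hax : a = x
      · exact hax ▸ Finset.mem_insert_self _ _
      · exact Finset.mem_insert_of_mem (Finset.mem_erase.2 ⟨hax, ha⟩)
    have insadm : ∀ {D : Finset (OE n)}, IsAdmissible D → x ∉ D → ostar x ∉ D →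
        IsAdmissible (insert x D) := by
      intro D hadm hxD hxsD a ha hmem
      rcases Finset.mem_insert.1 ha with rfl | haD
      · rcases Finset.mem_insert.1 hmem with h1 | h1
        · exact hxx h1
        · exact hxsD h1
      · rcases Finset.mem_insert.1 hmem with h1 | h1
        · exact hxsD (by rw [← h1, ostar_ostar']; exact haD)
        · exact hadm a haD h1
    ext C
    simp only [Set.mem_setOf_eq, minorCircCand]
    constructor
    · rintro ⟨hCg, hCadm, hCdep, hCmin⟩
      obtain ⟨hxC, hxsC⟩ := ground_not hCg
      have hdep' : ¬ IsIndep 𝓑 (insert x C) := fun hi =>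
        hCdep ((indep_minor_ns' hs hxC).2 hi)
      obtain ⟨C₀, hC₀sub, hC₀⟩ := exists_circuit' _ (insadm hCadm hxC hxsC) hdep'
      have hxsC₀ : ostar x ∉ C₀ := fun hmem => by
        rcases Finset.mem_insert.1 (hC₀sub hmem) with h1 | h1
        · exact hxx h1
        · exact hxsC h1
      have hC₀ne : C₀ ≠ {x} := fun heq => hC₀.2.1 (heq ▸ hxindep)
      have herasesub : C₀.erase x ⊆ C := by
        intro a ha
        obtain ⟨hax, haC₀⟩ := Finset.mem_erase.1 ha
        rcases Finset.mem_insert.1 (hC₀sub haC₀) with h1 | h1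
        · exact absurd h1 hax
        · exact h1
      have heradep : ¬ IsIndep (minorB 𝓑 x) (C₀.erase x) := by
        rw [indep_minor_ns' hs (Finset.notMem_erase x C₀)]
        exact depmono (insert_erase_sub C₀) hC₀.2.1
      have heq : C₀.erase x = C := by
        by_contra hne'
        exact heradep (hCmin _ (Finset.ssubset_iff_subset_ne.2 ⟨herasesub, hne'⟩))
      refine ⟨⟨C₀, hC₀, hxsC₀, hC₀ne, heq.symm⟩, ?_⟩
      rintro D ⟨C', hC', hxs', hne', rfl⟩ hDC
      have hDdep : ¬ IsIndep (minorB 𝓑 x) (C'.erase x) := by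
        rw [indep_minor_ns' hs (Finset.notMem_erase x C')]
        exact depmono (insert_erase_sub C') hC'.2.1
      exact hDdep (hCmin _ hDC)
    · rintro ⟨⟨C', hC', hxs', hne', rfl⟩, hmin⟩
      have hxe : x ∉ C'.erase x := Finset.notMem_erase x C'
      have hxse : ostar x ∉ C'.erase x := fun hmem => hxs' (Finset.mem_of_mem_erase hmem)
      refine ⟨groundsub hxe hxse,
        admissible_subset' (Finset.erase_subset _ _) hC'.1, ?_, ?_⟩
      · rw [indep_minor_ns' hs hxe]
        exact depmono (insert_erase_sub C') hC'.2.1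
      · intro D hD
        by_contra hDdep
        have hxD : x ∉ D := fun hmem => hxe (hD.subset hmem)
        have hxsD : ostar x ∉ D := fun hmem => hxse (hD.subset hmem)
        have hadmD : IsAdmissible D :=
          admissible_subset' hD.subset (admissible_subset' (Finset.erase_subset _ _) hC'.1)
        have hdepD : ¬ IsIndep 𝓑 (insert x D) := fun hi =>
          hDdep ((indep_minor_ns' hs hxD).2 hi)
        obtain ⟨C'', hsub'', hC''⟩ := exists_circuit' _ (insadm hadmD hxD hxsD) hdepD
        have hxs'' : ostar x ∉ C'' := fun hmem => by
          rcases Finset.mem_insert.1 (hsub'' hmem) with h1 | h1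
          · exact hxx h1
          · exact hxsD h1
        have hne'' : C'' ≠ {x} := fun heq => hC''.2.1 (heq ▸ hxindep)
        have hss : C''.erase x ⊂ C'.erase x := by
          refine lt_of_le_of_lt (Finset.le_iff_subset.2 ?_) hD
          intro a ha
          obtain ⟨hax, haC⟩ := Finset.mem_erase.1 ha
          rcases Finset.mem_insert.1 (hsub'' haC) with h1 | h1
          · exact absurd h1 hax
          · exact h1
        exact hmin _ ⟨C'', hC'', hxs'', hne'', rfl⟩ hss
end

section
/- Let F be a tract and φ: 𝒯_n → F a strong Wick function on E = [n] ∪ [n]*. Then the support Supp(φ) = {T ∈ 𝒯_n : φ(T) ≠ 0} is the collection of bases of an orthogonal matroid on E. -/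
open scoped Classical

/-- A tract structure on a pointed commutative group `F = F^× ∪ {0}`: the null set `N` is a set
of multisets of nonzero elements of `F` (a multiset encodes a formal `ℕ`-linear combination of
elements of the group `F^×`, i.e. an element of the group semiring `ℕ[F^×]`). -/
structure TractOn (F : Type) [CommGroupWithZero F] where
  /-- The null set `N_F ⊆ ℕ[F^×]`. -/
  N : Set (Multiset F)
  /-- Members of `N_F` are formal sums of elements of `F^× = F \ {0}`. -/
  not_zero_mem : ∀ S ∈ N, (0 : F) ∉ S
  /-- (T1) `0 ∈ N_F`. -/
  zero_mem : (0 : Multiset F) ∈ N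
  /-- (T2) `1 ∉ N_F`. -/
  one_not_mem : ({1} : Multiset F) ∉ N
  /-- (T3) there is a unique `ε ∈ F^×` with `1 + ε ∈ N_F`. -/
  eps_exists : ∃! ε : F, ε ≠ 0 ∧ ({1, ε} : Multiset F) ∈ N
  /-- (T4) `N_F` is closed under multiplication by elements of `F^×`. -/
  smul_mem : ∀ g : F, g ≠ 0 → ∀ S ∈ N, Multiset.map (fun a => g * a) S ∈ N

/-- The distinguished element `ε` (playing the role of `-1`) of a tract. -/
noncomputable def TractOn.eps {F : Type} [CommGroupWithZero F] (t : TractOn F) : F :=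
  t.eps_exists.exists.choose

/-- A formal sum of (possibly zero) elements of `F` "sums to zero" in the tract `t`:
after discarding zero summands it lies in the null set. -/
def TractOn.Null {F : Type} [CommGroupWithZero F] (t : TractOn F) (S : Multiset F) : Prop :=
  Multiset.filter (fun x => x ≠ 0) S ∈ t.N

/-- The formal sum `Σ_k (-1)^k φ(T₁ △ {x_k, x_k*}) φ(T₂ △ {x_k, x_k*})` appearing in the Wick
relation for `T₁, T₂`, where `(T₁ △ T₂) ∩ [n] = {x₁ < ⋯ < x_m}` (the sign `-1` is `t.eps`). -/
noncomputable def wickSum {n : ℕ} {F : Type} [CommGroupWithZero F] (t : TractOn F)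
    (φ : Finset (OE n) → F) (T₁ T₂ : Finset (OE n)) : Multiset F :=
  ((((symmDiff T₁ T₂).filter (fun x => x.2 = true)).image Prod.fst).sort (· ≤ ·)).mapIdx
    (fun k x => t.eps ^ (k + 1) * φ (symmDiff T₁ (pairS (x, true))) *
      φ (symmDiff T₂ (pairS (x, true))))

/-- A strong Wick function on `E = [n] ∪ [n]*` with coefficients in the tract `t`, viewed as a
function on all finite subsets of `E` that vanishes off transversals: it is not identically
zero on transversals, and satisfies the Wick relations (W2). -/
def IsStrongWick {n : ℕ} {F : Type} [CommGroupWithZero F] (t : TractOn F)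
    (φ : Finset (OE n) → F) : Prop :=
  (∀ T : Finset (OE n), ¬ IsTransversal T → φ T = 0) ∧
  (∃ T : Finset (OE n), IsTransversal T ∧ φ T ≠ 0) ∧
  ∀ T₁ T₂ : Finset (OE n), IsTransversal T₁ → IsTransversal T₂ →
    t.Null (wickSum t φ T₁ T₂)

lemma mem_pairS {n : ℕ} {x z : OE n} : z ∈ pairS x ↔ z.1 = x.1 := by
  obtain ⟨i, b⟩ := x; obtain ⟨j, c⟩ := z
  simp only [pairS, ostar, Finset.mem_insert, Finset.mem_singleton, Prod.mk.injEq]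
  cases b <;> cases c <;> simp

lemma isTransversal_iff {n : ℕ} {T : Finset (OE n)} :
    IsTransversal T ↔ ∀ i : Fin n, ((i, true) ∈ T ↔ (i, false) ∉ T) := by
  constructor
  · rintro ⟨hcard, hadm⟩ i
    have hinj : Set.InjOn Prod.fst (T : Set (OE n)) := by
      rintro ⟨a, b⟩ ha ⟨c, d⟩ hc (h : a = c)
      subst h
      by_contra hne
      have hbd : d = !b := by
        cases b <;> cases d <;> simp_all
      exact hadm _ ha (by simpa [ostar, hbd] using hc)
    have himg : T.image Prod.fst = Finset.univ := by
      apply Finset.eq_univ_of_card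
      rw [Finset.card_image_of_injOn hinj, hcard, Fintype.card_fin]
    have hi : ∃ z ∈ T, z.1 = i := by
      have : i ∈ T.image Prod.fst := by rw [himg]; exact Finset.mem_univ i
      simpa [Finset.mem_image] using this
    obtain ⟨⟨j, b⟩, hz, (hji : j = i)⟩ := hi
    subst hji
    constructor
    · intro ht
      exact hadm _ ht
    · intro hf
      cases b
      · exact absurd hz hf
      · exact hz
  · intro hP
    constructor
    · have hT : T = Finset.univ.image
          (fun i : Fin n => if (i, true) ∈ T then ((i, true) : OE n) else (i, false)) := by
        ext ⟨i, b⟩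
        simp only [Finset.mem_image, Finset.mem_univ, true_and]
        constructor
        · intro hz
          refine ⟨i, ?_⟩
          cases b
          · have hnt : (i, true) ∉ T := fun ht => (hP i).mp ht hz
            rw [if_neg hnt]
          · rw [if_pos hz]
        · rintro ⟨j, hj⟩
          by_cases hjt : (j, true) ∈ T
          · rw [if_pos hjt] at hj
            rw [← hj]; exact hjt
          · rw [if_neg hjt] at hj
            rw [← hj]
            exact not_not.mp (fun hf => hjt ((hP j).mpr hf))
      rw [hT, Finset.card_image_of_injective _ ?_, Finset.card_univ, Fintype.card_fin]
      intro a b hab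
      have h1 : ∀ c : Fin n,
          (if (c, true) ∈ T then ((c, true) : OE n) else (c, false)).1 = c := by
        intro c; split <;> rfl
      have := congrArg Prod.fst hab
      rwa [h1, h1] at this
    · rintro ⟨i, b⟩ hz hsz
      cases b
      · exact (hP i).mp (by simpa [ostar] using hsz) hz
      · exact (hP i).mp hz (by simpa [ostar] using hsz)

section listlemmas
variable {α : Type*} {F : Type} [CommGroupWithZero F]

lemma aux0 : ∀ (L : List α) (f : ℕ → α → F),
    (∀ j ∈ L, ∀ k, f k j = 0) →
    Multiset.filter (fun a => a ≠ 0) (↑(List.mapIdx f L) : Multiset F) = 0 := by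
  intro L
  induction L with
  | nil => intro f _; simp
  | cons a l ih =>
    intro f hf
    rw [List.mapIdx_cons, ← Multiset.cons_coe, Multiset.filter_cons_of_neg]
    · exact ih _ (fun j hj k => hf j (List.mem_cons_of_mem a hj) (k + 1))
    · simp [hf a List.mem_cons_self 0]

lemma aux1 : ∀ (L : List α) (f : ℕ → α → F) (i₀ : α),
    L.Nodup → i₀ ∈ L → (∀ j ∈ L, j ≠ i₀ → ∀ k, f k j = 0) → (∀ k, f k i₀ ≠ 0) →
    ∃ k, Multiset.filter (fun a => a ≠ 0) (↑(List.mapIdx f L) : Multiset F)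
      = {f k i₀} := by
  intro L
  induction L with
  | nil => intro f i₀ _ h; simp at h
  | cons a l ih =>
    intro f i₀ hnd hmem hz hnz
    rw [List.mapIdx_cons, ← Multiset.cons_coe]
    by_cases ha : a = i₀
    · subst ha
      have hnl : ∀ j ∈ l, ∀ k, f (k + 1) j = 0 := by
        intro j hj k
        exact hz j (List.mem_cons_of_mem a hj)
          (fun he => (List.nodup_cons.mp hnd).1 (he ▸ hj)) (k + 1)
      refine ⟨0, ?_⟩
      rw [Multiset.filter_cons_of_pos _ (by simpa using hnz 0),
        aux0 l _ hnl]
      rfl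
    · have hmem' : i₀ ∈ l := by
        rcases List.mem_cons.mp hmem with h | h
        · exact absurd h.symm ha
        · exact h
      obtain ⟨k, hk⟩ := ih (fun k => f (k + 1)) i₀ (List.nodup_cons.mp hnd).2 hmem'
        (fun j hj hne k => hz j (List.mem_cons_of_mem a hj) hne (k + 1))
        (fun k => hnz (k + 1))
      refine ⟨k + 1, ?_⟩
      rw [Multiset.filter_cons_of_neg _ (by simp [hz a List.mem_cons_self ha 0]), hk]
end listlemmas


lemma TractOn.eps_ne_zero {F : Type} [CommGroupWithZero F] (t : TractOn F) : t.eps ≠ 0 :=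
  t.eps_exists.exists.choose_spec.1

lemma TractOn.singleton_not_mem {F : Type} [CommGroupWithZero F] (t : TractOn F)
    {a : F} (ha : a ≠ 0) : ({a} : Multiset F) ∉ t.N := by
  intro hmem
  have h2 := t.smul_mem a⁻¹ (inv_ne_zero ha) _ hmem
  rw [Multiset.map_singleton, inv_mul_cancel₀ ha] at h2
  exact t.one_not_mem h2

lemma transversal_symmDiff_pairS {n : ℕ} {B : Finset (OE n)} (hB : IsTransversal B)
    (x : OE n) : IsTransversal (symmDiff B (pairS x)) := by
  rw [isTransversal_iff] at hB ⊢
  intro i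
  have := hB i
  simp only [Finset.mem_symmDiff, mem_pairS]
  tauto

lemma transversal_symmDiff_union {n : ℕ} {B : Finset (OE n)} (hB : IsTransversal B)
    (x y : OE n) : IsTransversal (symmDiff B (pairS x ∪ pairS y)) := by
  rw [isTransversal_iff] at hB ⊢
  intro i
  have := hB i
  simp only [Finset.mem_symmDiff, Finset.mem_union, mem_pairS]
  tauto

lemma pair_mem_symmDiff {n : ℕ} {T₁ T₂ : Finset (OE n)} (h₁ : IsTransversal T₁)
    (h₂ : IsTransversal T₂) {i : Fin n} (h : ((i, true) : OE n) ∈ symmDiff T₁ T₂) :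
    ((i, false) : OE n) ∈ symmDiff T₁ T₂ := by
  rw [isTransversal_iff] at h₁ h₂
  have ha := h₁ i; have hb := h₂ i
  simp only [Finset.mem_symmDiff] at h ⊢
  tauto

lemma symmDiff_pair_pair {n : ℕ} (B₁ B₂ : Finset (OE n)) (p : Finset (OE n)) :
    symmDiff (symmDiff B₁ p) (symmDiff B₂ p) = symmDiff B₁ B₂ := by
  rw [symmDiff_comm B₂ p, symmDiff_assoc, symmDiff_symmDiff_cancel_left]

lemma symmDiff_union_split {n : ℕ} (B : Finset (OE n)) {x y : OE n} (hxy : x.1 ≠ y.1) :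
    symmDiff (symmDiff B (pairS x)) (pairS y) = symmDiff B (pairS x ∪ pairS y) := by
  have hdisj : Disjoint (pairS x) (pairS y) := by
    rw [Finset.disjoint_left]
    intro z hz hz'
    exact hxy ((mem_pairS.mp hz).symm.trans (mem_pairS.mp hz'))
  rw [symmDiff_assoc, hdisj.symmDiff_eq_sup, Finset.sup_eq_union]

lemma pairS_fst_true {n : ℕ} (x : OE n) : pairS ((x.1, true) : OE n) = pairS x := by
  ext z; simp [mem_pairS]

/-- The support of a strong Wick function is the set of bases of an orthogonal matroid. -/
theorem strongWick_support_isOrthoMatroid {n : ℕ} {F : Type} [CommGroupWithZero F]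
    (t : TractOn F) (φ : Finset (OE n) → F) (h : IsStrongWick t φ) :
    IsOrthoMatroid {T | IsTransversal T ∧ φ T ≠ 0} := by
  obtain ⟨hvan, ⟨T₀, hT₀, hφ₀⟩, hW⟩ := h
  refine ⟨⟨T₀, hT₀, hφ₀⟩, fun B hB => hB.1, ?_⟩
  rintro B₁ ⟨hB₁t, hB₁φ⟩ B₂ ⟨hB₂t, hB₂φ⟩ x hx hx'
  by_contra hcon
  push_neg at hcon
  set T₁ := symmDiff B₁ (pairS x) with hT₁def
  set T₂ := symmDiff B₂ (pairS x) with hT₂def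
  have hT₁ : IsTransversal T₁ := transversal_symmDiff_pairS hB₁t x
  have hT₂ : IsTransversal T₂ := transversal_symmDiff_pairS hB₂t x
  have hST : symmDiff T₁ T₂ = symmDiff B₁ B₂ := symmDiff_pair_pair B₁ B₂ _
  have hnull := hW T₁ T₂ hT₁ hT₂
  unfold TractOn.Null wickSum at hnull
  rw [hST] at hnull
  set L := ((((symmDiff B₁ B₂).filter (fun z => z.2 = true)).image Prod.fst).sort (· ≤ ·))
    with hLdef
  set f : ℕ → Fin n → F := fun k j => t.eps ^ (k + 1) *
      φ (symmDiff T₁ (pairS (j, true))) * φ (symmDiff T₂ (pairS (j, true))) with hfdef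
  have hxtrue : ((x.1, true) : OE n) ∈ symmDiff B₁ B₂ := by
    rcases x with ⟨i, b⟩
    cases b
    · simpa [ostar] using hx'
    · exact hx
  have hmemL : x.1 ∈ L := by
    rw [hLdef, Finset.mem_sort]
    exact Finset.mem_image.mpr ⟨(x.1, true), Finset.mem_filter.mpr ⟨hxtrue, rfl⟩, rfl⟩
  have hnz : ∀ k, f k x.1 ≠ 0 := by
    intro k
    have h1 : symmDiff T₁ (pairS ((x.1, true) : OE n)) = B₁ := by
      rw [pairS_fst_true, hT₁def, symmDiff_symmDiff_cancel_right]
    have h2 : symmDiff T₂ (pairS ((x.1, true) : OE n)) = B₂ := by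
      rw [pairS_fst_true, hT₂def, symmDiff_symmDiff_cancel_right]
    rw [hfdef]
    dsimp only
    rw [h1, h2]
    exact mul_ne_zero (mul_ne_zero (pow_ne_zero _ t.eps_ne_zero) hB₁φ) hB₂φ
  have hz : ∀ j ∈ L, j ≠ x.1 → ∀ k, f k j = 0 := by
    intro j hjL hne k
    have hjtrue : ((j, true) : OE n) ∈ symmDiff B₁ B₂ := by
      rw [hLdef, Finset.mem_sort] at hjL
      obtain ⟨z, hz₁, hz₂⟩ := Finset.mem_image.mp hjL
      obtain ⟨hz₃, hz₄⟩ := Finset.mem_filter.mp hz₁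
      have hz5 : z = (j, true) := Prod.ext hz₂ hz₄
      rwa [hz5] at hz₃
    have hjfalse : ((j, false) : OE n) ∈ symmDiff B₁ B₂ :=
      pair_mem_symmDiff hB₁t hB₂t hjtrue
    have hpair : pairS ((j, true) : OE n) ≠ pairS x := by
      intro he
      exact hne (mem_pairS.mp
        (he ▸ (mem_pairS.mpr rfl : ((j, true) : OE n) ∈ pairS ((j, true) : OE n))))
    have hnotB := hcon ((j, true) : OE n) hjtrue (by simpa [ostar] using hjfalse) hpair
    have hφ0 : φ (symmDiff B₁ (pairS x ∪ pairS ((j, true) : OE n))) = 0 := by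
      by_contra hne0
      exact hnotB ⟨transversal_symmDiff_union hB₁t _ _, hne0⟩
    rw [hfdef]
    dsimp only
    rw [hT₁def, symmDiff_union_split B₁ (Ne.symm hne), hφ0, mul_zero, zero_mul]
  obtain ⟨k, hk⟩ := aux1 L f x.1 (Finset.sort_nodup _ _) hmemL hz hnz
  rw [hk] at hnull
  exact t.singleton_not_mem (hnz k) hnull
end
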